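/- For the scalar BPSK Gaussian channel, the MMSE admits the low-SNR expansion mmse(snr) = 1 − snr + O(snr²) as snr → 0⁺. -/

import Mathlib

/-! With `t = √snr` and `y = z + t` the integral becomes `∫ tanh (t z + t²) e^{-z²/2} dz`.
Subtracting `∫ tanh (t z) e^{-z²/2} dz`, which vanishes by oddness, and `√(2π) t²` leaves the
Gaussian average of `tanh (t z + t²) - tanh (t z) - t²`. Since `(x - tanh x)' = tanh² x ≤ x²`,
the mean value theorem bounds this by `(|t z| + t²)² t² ≤ 2 t⁴ (z² + 1)` for `|t| ≤ 1`, whose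
Gaussian average is `O(t⁴) = O(snr²)`. -/

open Real MeasureTheory

namespace Real

theorem hasDerivAt_tanh (x : ℝ) : HasDerivAt tanh (1 - tanh x ^ 2) x := by
  have hcosh : cosh x ≠ 0 := (cosh_pos x).ne'
  rw [show tanh = sinh / cosh from funext tanh_eq_sinh_div_cosh]
  refine ((hasDerivAt_sinh x).div (hasDerivAt_cosh x) hcosh).congr_deriv ?_
  rw [Pi.div_apply, div_pow, one_sub_div (pow_ne_zero 2 hcosh)]
  ring

theorem continuous_tanh : Continuous tanh :=
  continuous_iff_continuousAt.2 fun x => (hasDerivAt_tanh x).continuousAt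

theorem abs_tanh_le_abs (x : ℝ) : |tanh x| ≤ |x| := by
  have h := convex_univ.norm_image_sub_le_of_norm_hasDerivWithin_le
    (fun y _ => (hasDerivAt_tanh y).hasDerivWithinAt) (C := 1)
    (fun y _ => by
      rw [norm_eq_abs, abs_le]
      constructor <;> nlinarith [tanh_sq_lt_one y, sq_nonneg (tanh y)])
    (Set.mem_univ 0) (Set.mem_univ x)
  simpa [tanh_zero] using h

theorem abs_tanh_add_sub_tanh_sub_le (a h : ℝ) :
    |tanh (a + h) - tanh a - h| ≤ (|a| + |h|) ^ 2 * |h| := by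
  set B := |a| + |h|
  have ha : a ∈ Set.Icc (-B) B := abs_le.1 (le_add_of_nonneg_right (abs_nonneg h))
  have hah : a + h ∈ Set.Icc (-B) B := abs_le.1 (abs_add_le a h)
  have hmvt := (convex_Icc (-B) B).norm_image_sub_le_of_norm_hasDerivWithin_le
    (f := fun y => y - tanh y)
    (fun y _ => (((hasDerivAt_id y).sub (hasDerivAt_tanh y)).congr_deriv
      (by ring : 1 - (1 - tanh y ^ 2) = tanh y ^ 2)).hasDerivWithinAt)
    (fun y hy => by
      rw [norm_pow, norm_eq_abs]
      exact pow_le_pow_left₀ (abs_nonneg _)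
        ((abs_tanh_le_abs y).trans (abs_le.2 hy)) 2)
    ha hah
  rw [norm_eq_abs, norm_eq_abs, add_sub_cancel_left] at hmvt
  rw [← abs_neg]
  convert hmvt using 2
  ring

end Real

theorem integral_eq_zero_of_odd {G E : Type*} [MeasurableSpace G] [AddGroup G] [MeasurableNeg G]
    [NormedAddCommGroup E] [NormedSpace ℝ E] {μ : Measure G} [μ.IsNegInvariant] {f : G → E}
    (hf : ∀ x, f (-x) = -f x) : ∫ x, f x ∂μ = 0 := by
  have h := integral_neg_eq_self f μ
  simp only [hf, integral_neg] at h
  linear_combination (norm := module) (-2⁻¹ : ℝ) • h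

theorem MeasureTheory.Integrable.tanh_mul {α : Type*} [MeasurableSpace α] {μ : Measure α}
    {f g : α → ℝ} (hf : AEStronglyMeasurable f μ) (hg : Integrable g μ) :
    Integrable (fun x => tanh (f x) * g x) μ :=
  hg.bdd_mul (continuous_tanh.comp_aestronglyMeasurable hf)
    (ae_of_all _ fun x => (abs_tanh_lt_one (f x)).le)

theorem integrable_pow_mul_exp_neg_mul_sq {b : ℝ} (hb : 0 < b) (n : ℕ) :
    Integrable (fun x : ℝ => x ^ n * exp (-b * x ^ 2)) := by
  simpa only [rpow_natCast] using
    integrable_rpow_mul_exp_neg_mul_sq hb (s := n) (by linarith [n.cast_nonneg (α := ℝ)])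

theorem exp_neg_sq_div_two (x : ℝ) : exp (-x ^ 2 / 2) = exp (-(1 / 2) * x ^ 2) := by
  ring_nf

theorem integrable_exp_neg_sq_div_two : Integrable (fun x : ℝ => exp (-x ^ 2 / 2)) := by
  simpa only [exp_neg_sq_div_two] using integrable_exp_neg_mul_sq (b := 1 / 2) (by norm_num)

theorem integrable_sq_mul_exp_neg_sq_div_two :
    Integrable (fun x : ℝ => x ^ 2 * exp (-x ^ 2 / 2)) := by
  simpa only [exp_neg_sq_div_two] using
    integrable_pow_mul_exp_neg_mul_sq (b := 1 / 2) (by norm_num) 2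

theorem integral_exp_neg_sq_div_two : ∫ x : ℝ, exp (-x ^ 2 / 2) = √(2 * π) := by
  simp only [exp_neg_sq_div_two, integral_gaussian]
  congr 1
  field_simp

theorem integral_tanh_mul_exp_neg_sub_sq_div_two (t : ℝ) :
    ∫ y, tanh (t * y) * exp (-(y - t) ^ 2 / 2) = ∫ z, tanh (t * z + t ^ 2) * exp (-z ^ 2 / 2) := by
  rw [← integral_add_right_eq_self _ t]
  simp only [add_sub_cancel_right, mul_add, sq]

theorem integral_tanh_mul_mul_exp_neg_sq_div_two (t : ℝ) :
    ∫ z, tanh (t * z) * exp (-z ^ 2 / 2) = 0 :=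
  integral_eq_zero_of_odd fun z => by rw [mul_neg, tanh_neg, neg_sq, neg_mul]

theorem abs_tanh_mul_add_sq_sub_tanh_mul_sub_sq_le {t : ℝ} (ht : |t| ≤ 1) (z : ℝ) :
    |tanh (t * z + t ^ 2) - tanh (t * z) - t ^ 2| ≤ 2 * t ^ 4 * (z ^ 2 + 1) := by
  have hsq : |t ^ 2| = t ^ 2 := abs_of_nonneg (sq_nonneg t)
  calc |tanh (t * z + t ^ 2) - tanh (t * z) - t ^ 2|
      ≤ (|t| * |z| + t ^ 2) ^ 2 * t ^ 2 := by
        have h := abs_tanh_add_sub_tanh_sub_le (t * z) (t ^ 2)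
        rwa [abs_mul, hsq] at h
    _ ≤ (|t| * (|z| + 1)) ^ 2 * t ^ 2 := by
        gcongr
        nlinarith [abs_nonneg t, sq_abs t]
    _ = t ^ 4 * (|z| + 1) ^ 2 := by rw [mul_pow, sq_abs]; ring
    _ ≤ 2 * t ^ 4 * (z ^ 2 + 1) := by
        nlinarith [sq_nonneg (|z| - 1), sq_abs z, pow_nonneg (sq_nonneg t) 2]

theorem abs_integral_tanh_mul_add_sq_sub_le {t : ℝ} (ht : |t| ≤ 1) :
    |(∫ z, tanh (t * z + t ^ 2) * exp (-z ^ 2 / 2)) - √(2 * π) * t ^ 2|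
      ≤ (2 * ∫ z, (z ^ 2 + 1) * exp (-z ^ 2 / 2)) * t ^ 4 := by
  have hφ := integrable_exp_neg_sq_div_two
  have hsplit : (∫ z, tanh (t * z + t ^ 2) * exp (-z ^ 2 / 2)) - √(2 * π) * t ^ 2
      = ∫ z, (tanh (t * z + t ^ 2) - tanh (t * z) - t ^ 2) * exp (-z ^ 2 / 2) := by
    have h₁ := hφ.tanh_mul (f := fun z => t * z + t ^ 2) (by fun_prop)
    have h₂ := hφ.tanh_mul (f := fun z => t * z) (by fun_prop)
    calc _ = (∫ z, tanh (t * z + t ^ 2) * exp (-z ^ 2 / 2))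
          - (∫ z, tanh (t * z) * exp (-z ^ 2 / 2)) - ∫ z, t ^ 2 * exp (-z ^ 2 / 2) := by
          rw [integral_tanh_mul_mul_exp_neg_sq_div_two, integral_const_mul,
            integral_exp_neg_sq_div_two]
          ring
      _ = _ := by
          have h₁₂ : Integrable fun z =>
              tanh (t * z + t ^ 2) * exp (-z ^ 2 / 2) - tanh (t * z) * exp (-z ^ 2 / 2) :=
            h₁.sub h₂
          rw [← integral_sub h₁ h₂, ← integral_sub h₁₂ (hφ.const_mul _)]
          simp only [sub_mul]
  have hdom : Integrable fun z : ℝ => (z ^ 2 + 1) * exp (-z ^ 2 / 2) := by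
    simp only [add_mul, one_mul]
    exact integrable_sq_mul_exp_neg_sq_div_two.add hφ
  rw [hsplit, ← norm_eq_abs, mul_comm, ← mul_assoc, ← integral_const_mul]
  refine norm_integral_le_of_norm_le (hdom.const_mul _) (ae_of_all _ fun z => ?_)
  rw [norm_mul, norm_eq_abs, norm_of_nonneg (exp_pos _).le, ← mul_assoc, mul_comm (t ^ 4) 2]
  exact mul_le_mul_of_nonneg_right (abs_tanh_mul_add_sq_sub_tanh_mul_sub_sq_le ht z)
    (exp_pos _).le

/-- Low-SNR expansion of the BPSK MMSE: `mmse(snr) = 1 − snr + O(snr²)` as `snr → 0⁺`,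
where `mmse(snr) = 1 − (1/√(2π)) ∫ tanh(√snr·y) e^{−(y−√snr)²/2} dy`. -/
theorem bpsk_mmse_low_snr :
    ∃ C > (0 : ℝ), ∃ δ > (0 : ℝ), ∀ snr : ℝ, 0 < snr → snr < δ →
      |(1 - (1 / Real.sqrt (2 * π)) *
          ∫ y : ℝ, Real.tanh (Real.sqrt snr * y) * Real.exp (-(y - Real.sqrt snr) ^ 2 / 2))
        - (1 - snr)| ≤ C * snr ^ 2 := by
  set M := 2 * ∫ z, (z ^ 2 + 1) * exp (-z ^ 2 / 2)
  have hM : 0 ≤ M := mul_nonneg zero_le_two (integral_nonneg fun z => by positivity)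
  have hsqrt : 0 < √(2 * π) := by positivity
  refine ⟨M / √(2 * π) + 1, by positivity, 1, one_pos, fun snr hpos hlt => ?_⟩
  have hsnr : √snr ^ 2 = snr := sq_sqrt hpos.le
  have key := abs_integral_tanh_mul_add_sq_sub_le (t := √snr)
    (by rw [abs_of_nonneg (sqrt_nonneg _)]; exact sqrt_le_one.2 hlt.le)
  rw [← integral_tanh_mul_exp_neg_sub_sq_div_two √snr, hsnr, show √snr ^ 4 = snr ^ 2 by
    rw [show 4 = 2 * 2 from rfl, pow_mul, hsnr]] at key
  calc _ = |(∫ y, tanh (√snr * y) * exp (-(y - √snr) ^ 2 / 2)) - √(2 * π) * snr|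
        / √(2 * π) := by
        rw [← abs_of_pos hsqrt, ← abs_div, abs_of_pos hsqrt, ← abs_neg]
        congr 1
        field_simp
        ring
    _ ≤ M * snr ^ 2 / √(2 * π) := by gcongr
    _ ≤ (M / √(2 * π) + 1) * snr ^ 2 := by
        rw [mul_div_right_comm]
        nlinarith [sq_nonneg snr]
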